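/- arXiv:math/0608767 — 5 statements merged into one kernel-verified Lean document; each statement's English description precedes it below -/
import Mathlib

section
/- Let w : (0,∞) → ℂ be measurable with Im w(k) > 0 for almost every k > 0, and set δ(k) = Im w(k)/k. Define SQS = ∫₀^∞ log[ |w(k)+ik|² / (4k·Im w(k)) ] k² dk, QS = ∫₀^∞ log[ δ(k)/4 + 1/2 + 1/(4δ(k)) ] k² dk, and R = ∫₀^∞ log[ 1 + (Re w(k)/k)² ] k² dk, each interpreted as an integral with values in [0,∞] of a nonnegative integrand. Then QS ≤ SQS ≤ QS + R and R ≤ 55·SQS. In particular, SQS < ∞ if and only if QS + R < ∞. -/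
/-!
With `u = Re w`, `v = Im w`, the three integrands are `log A`, `log B` and `log C` times `k²`, where
`A = (u² + (v + k)²) / (4kv)`, `B = (v + k)² / (4kv)` and `C = 1 + (u/k)²`. Pointwise, `1 ≤ B ≤ A`
by AM-GM, `A ≤ B C` by expanding, and `C ≤ (2A - 1)² ≤ A⁴`; taking logarithms and integrating
gives `QS ≤ SQS ≤ QS + R` and `R ≤ 4 SQS`.
-/

open MeasureTheory Set
open scoped ENNReal

/-- The Strong Quasi-Szegő integral `∫₀^∞ log[ |w(k)+ik|² / (4k·Im w(k)) ] k² dk`. -/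
noncomputable def SQS (w : ℝ → ℂ) : ℝ≥0∞ :=
  ∫⁻ k in Ioi (0 : ℝ),
    ENNReal.ofReal
      (Real.log (‖w k + Complex.I * k‖ ^ 2 / (4 * k * (w k).im)) * k ^ 2)

/-- The Quasi-Szegő integral `∫₀^∞ log[ δ(k)/4 + 1/2 + 1/(4δ(k)) ] k² dk`
with `δ(k) = Im w(k) / k`. -/
noncomputable def QS (w : ℝ → ℂ) : ℝ≥0∞ :=
  ∫⁻ k in Ioi (0 : ℝ),
    ENNReal.ofReal
      (Real.log ((w k).im / k / 4 + 1 / 2 + 1 / (4 * ((w k).im / k))) * k ^ 2)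

/-- The integral `R = ∫₀^∞ log[ 1 + (Re w(k)/k)² ] k² dk`. -/
noncomputable def Rterm (w : ℝ → ℂ) : ℝ≥0∞ :=
  ∫⁻ k in Ioi (0 : ℝ),
    ENNReal.ofReal (Real.log (1 + ((w k).re / k) ^ 2) * k ^ 2)

open Real

section Pointwise

variable {u v k : ℝ}

lemma div_four_add_half_add_inv_eq (hk : k ≠ 0) (hv : v ≠ 0) :
    v / k / 4 + 1 / 2 + 1 / (4 * (v / k)) = (v + k) ^ 2 / (4 * k * v) := by
  field_simp
  ring

lemma Complex.norm_add_I_mul_sq (z : ℂ) (k : ℝ) :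
    ‖z + Complex.I * k‖ ^ 2 = z.re ^ 2 + (z.im + k) ^ 2 := by
  rw [Complex.sq_norm, Complex.normSq_apply]
  simp only [Complex.add_re, Complex.add_im, Complex.mul_re, Complex.mul_im, Complex.I_re,
    Complex.I_im, Complex.ofReal_re, Complex.ofReal_im]
  ring

lemma one_le_add_sq_div (hk : 0 < k) (hv : 0 < v) : 1 ≤ (v + k) ^ 2 / (4 * k * v) := by
  rw [one_le_div (by positivity)]
  nlinarith [sq_nonneg (v - k)]

lemma add_sq_div_le_add_sq_div (hk : 0 < k) (hv : 0 < v) :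
    (v + k) ^ 2 / (4 * k * v) ≤ (u ^ 2 + (v + k) ^ 2) / (4 * k * v) := by
  gcongr
  exact le_add_of_nonneg_left (sq_nonneg u)

lemma sq_add_add_sq_div_le_mul (hk : 0 < k) (hv : 0 < v) :
    (u ^ 2 + (v + k) ^ 2) / (4 * k * v) ≤ (v + k) ^ 2 / (4 * k * v) * (1 + (u / k) ^ 2) := by
  have hC : 1 + (u / k) ^ 2 = (k ^ 2 + u ^ 2) / k ^ 2 := by field_simp
  rw [hC, div_mul_div_comm, div_le_div_iff₀ (by positivity) (by positivity)]
  nlinarith [mul_nonneg (mul_nonneg (sq_nonneg u) hv.le) hk.le,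
    mul_nonneg (mul_nonneg (mul_nonneg (sq_nonneg u) hv.le) hv.le) hk.le]

lemma one_add_div_sq_le_pow_four (hk : 0 < k) (hv : 0 < v) :
    1 + (u / k) ^ 2 ≤ ((u ^ 2 + (v + k) ^ 2) / (4 * k * v)) ^ 4 := by
  set A := (u ^ 2 + (v + k) ^ 2) / (4 * k * v)
  have hA : 1 ≤ A := (one_le_add_sq_div hk hv).trans (add_sq_div_le_add_sq_div hk hv)
  have h2A : 2 * A - 1 = (u ^ 2 + k ^ 2 + v ^ 2) / (2 * k * v) := by
    simp only [A]
    field_simp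
    ring
  -- AM-GM for `u² + k²` and `v²`
  have hC : 1 + (u / k) ^ 2 ≤ (2 * A - 1) ^ 2 := by
    rw [h2A, div_pow (u ^ 2 + k ^ 2 + v ^ 2), le_div_iff₀ (by positivity)]
    have : (1 + (u / k) ^ 2) * (2 * k * v) ^ 2 = 4 * (u ^ 2 + k ^ 2) * v ^ 2 := by
      field_simp
      ring
    rw [this]
    nlinarith [sq_nonneg (u ^ 2 + k ^ 2 - v ^ 2)]
  calc 1 + (u / k) ^ 2 ≤ (2 * A - 1) ^ 2 := hC
    _ ≤ (A ^ 2) ^ 2 := by gcongr <;> nlinarith [sq_nonneg (A - 1)]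
    _ = A ^ 4 := by ring

end Pointwise

section Integrands

variable {z : ℂ} {k : ℝ}

lemma log_qs_le_log_sqs (hk : 0 < k) (hz : 0 < z.im) :
    log (z.im / k / 4 + 1 / 2 + 1 / (4 * (z.im / k))) ≤
      log (‖z + Complex.I * k‖ ^ 2 / (4 * k * z.im)) := by
  rw [div_four_add_half_add_inv_eq hk.ne' hz.ne', Complex.norm_add_I_mul_sq]
  exact log_le_log (by positivity) (add_sq_div_le_add_sq_div hk hz)

lemma log_sqs_le_log_qs_add_log_r (hk : 0 < k) (hz : 0 < z.im) :
    log (‖z + Complex.I * k‖ ^ 2 / (4 * k * z.im)) ≤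
      log (z.im / k / 4 + 1 / 2 + 1 / (4 * (z.im / k))) + log (1 + (z.re / k) ^ 2) := by
  rw [div_four_add_half_add_inv_eq hk.ne' hz.ne', Complex.norm_add_I_mul_sq,
    ← log_mul (by positivity) (by positivity)]
  have hA : 0 < (z.re ^ 2 + (z.im + k) ^ 2) / (4 * k * z.im) := by positivity
  exact log_le_log hA (sq_add_add_sq_div_le_mul hk hz)

lemma log_r_le_four_mul_log_sqs (hk : 0 < k) (hz : 0 < z.im) :
    log (1 + (z.re / k) ^ 2) ≤ 4 * log (‖z + Complex.I * k‖ ^ 2 / (4 * k * z.im)) := by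
  rw [Complex.norm_add_I_mul_sq, show (4 : ℝ) = (4 : ℕ) by norm_num, ← log_pow]
  exact log_le_log (by positivity) (one_add_div_sq_le_pow_four hk hz)

end Integrands

section Integrals

variable {w : ℝ → ℂ}

lemma QS_le_SQS (him : ∀ᵐ k ∂(volume.restrict (Ioi (0 : ℝ))), 0 < (w k).im) :
    QS w ≤ SQS w := by
  refine lintegral_mono_ae ?_
  filter_upwards [him, ae_restrict_mem measurableSet_Ioi] with k hz (hk : 0 < k)
  exact ENNReal.ofReal_le_ofReal
    (mul_le_mul_of_nonneg_right (log_qs_le_log_sqs hk hz) (sq_nonneg k))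

lemma SQS_le_QS_add_Rterm (hw : Measurable w)
    (him : ∀ᵐ k ∂(volume.restrict (Ioi (0 : ℝ))), 0 < (w k).im) :
    SQS w ≤ QS w + Rterm w := by
  rw [QS, Rterm, ← lintegral_add_left (by fun_prop)]
  refine lintegral_mono_ae ?_
  filter_upwards [him, ae_restrict_mem measurableSet_Ioi] with k hz (hk : 0 < k)
  refine (ENNReal.ofReal_le_ofReal ?_).trans ENNReal.ofReal_add_le
  rw [← add_mul]
  exact mul_le_mul_of_nonneg_right (log_sqs_le_log_qs_add_log_r hk hz) (sq_nonneg k)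

lemma Rterm_le_four_mul_SQS (him : ∀ᵐ k ∂(volume.restrict (Ioi (0 : ℝ))), 0 < (w k).im) :
    Rterm w ≤ 4 * SQS w := by
  rw [SQS, ← lintegral_const_mul' _ _ ENNReal.ofNat_ne_top]
  refine lintegral_mono_ae ?_
  filter_upwards [him, ae_restrict_mem measurableSet_Ioi] with k hz (hk : 0 < k)
  rw [← ENNReal.ofReal_ofNat, ← ENNReal.ofReal_mul (by norm_num), ← mul_assoc]
  exact ENNReal.ofReal_le_ofReal
    (mul_le_mul_of_nonneg_right (log_r_le_four_mul_log_sqs hk hz) (sq_nonneg k))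

end Integrals

lemma ENNReal.lt_top_iff_add_lt_top_of_le {a b c : ℝ≥0∞} (C : ℝ≥0∞) (hC : C ≠ ⊤)
    (hac : a ≤ c) (hcab : c ≤ a + b) (hbc : b ≤ C * c) : c < ⊤ ↔ a + b < ⊤ := by
  refine ⟨fun hc => ?_, hcab.trans_lt⟩
  calc a + b ≤ c + C * c := add_le_add hac hbc
    _ < ⊤ := ENNReal.add_lt_top.2 ⟨hc, ENNReal.mul_lt_top hC.lt_top hc⟩

/-- Let `w : (0,∞) → ℂ` be measurable with `Im w(k) > 0` for a.e. `k > 0`.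
Then `QS ≤ SQS ≤ QS + R` and `R ≤ 55·SQS`; in particular `SQS < ∞ ↔ QS + R < ∞`. -/
theorem stmt_2 (w : ℝ → ℂ) (hw : Measurable w)
    (him : ∀ᵐ k ∂(volume.restrict (Ioi (0 : ℝ))), 0 < (w k).im) :
    QS w ≤ SQS w ∧ SQS w ≤ QS w + Rterm w ∧ Rterm w ≤ 55 * SQS w ∧
      (SQS w < ⊤ ↔ QS w + Rterm w < ⊤) := by
  have hQS := QS_le_SQS him
  have hSQS := SQS_le_QS_add_Rterm hw him
  have hR : Rterm w ≤ 55 * SQS w :=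
    (Rterm_le_four_mul_SQS him).trans (by gcongr; norm_num)
  exact ⟨hQS, hSQS, hR, ENNReal.lt_top_iff_add_lt_top_of_le 55 (by norm_num) hQS hSQS hR⟩
end

section
/- Let τ be a locally finite positive Borel measure on [1,∞) with Σ_{n=1}^∞ τ([n,n+1])² < ∞. Then the function F(q) = π^{-1/2} ∫_{[1,∞)} p⁻¹ e^{-(q-p)²} dτ(p) is finite for every q ∈ ℝ and belongs to L²(ℝ, dq). -/
/-!
Cut `[1, ∞)` into the cells `Iₙ = [n + 1, n + 2]` with masses `aₙ = τ(Iₙ)`, and let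
`wₙ(q) = ∫_{Jₙ} e^{-(q-t)²/2} dt` be the Gaussian mass of the unit interval `Jₙ = (n + 1, n + 2]`.
For `p ∈ Iₙ` the kernel `p⁻¹ e^{-(q-p)²}` is at most `e · wₙ(q)`, so the integral is at most
`e Σ aₙ wₙ(q)`. Since the `Jₙ` are disjoint, `Σ wₙ(q) ≤ √(2π)`, and each `wₙ` has total integral
`√(2π)`. Cauchy–Schwarz in the form `(Σ aₙ wₙ)² ≤ (Σ aₙ² wₙ)(Σ wₙ)` then bounds both the value at
every `q` and the `L²` norm by a multiple of `Σ aₙ²`.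
-/

open MeasureTheory Set
open scoped ENNReal NNReal

lemma ENNReal.two_mul_le_add_sq (x y : ℝ≥0∞) : 2 * (x * y) ≤ x ^ 2 + y ^ 2 := by
  rcases eq_top_or_lt_top x with rfl | hx
  · simp
  rcases eq_top_or_lt_top y with rfl | hy
  · simp
  lift x to ℝ≥0 using hx.ne
  lift y to ℝ≥0 using hy.ne
  exact_mod_cast (mul_assoc 2 x y).symm.trans_le (_root_.two_mul_le_add_sq x y)

lemma ENNReal.sq_tsum_mul_le (a w : ℕ → ℝ≥0∞) :
    (∑' n, a n * w n) ^ 2 ≤ (∑' n, a n ^ 2 * w n) * ∑' n, w n := by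
  have hswap : ∑' n, ∑' m, a m ^ 2 * (w n * w m) = ∑' n, ∑' m, a n ^ 2 * (w n * w m) :=
    ENNReal.tsum_comm.trans (tsum_congr fun n => tsum_congr fun m => by rw [mul_comm (w m)])
  have hprod : ∑' n, ∑' m, a n ^ 2 * (w n * w m) = (∑' n, a n ^ 2 * w n) * ∑' n, w n := by
    simp only [ENNReal.tsum_mul_left, ← mul_assoc, ENNReal.tsum_mul_right]
  rw [← ENNReal.mul_le_mul_iff_right two_ne_zero ENNReal.ofNat_ne_top]
  calc 2 * (∑' n, a n * w n) ^ 2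
      = ∑' n, ∑' m, 2 * (a n * a m) * (w n * w m) := by
        simp only [sq, ← ENNReal.tsum_mul_left, ← ENNReal.tsum_mul_right]
        exact tsum_congr fun n => tsum_congr fun m => by ring
    _ ≤ ∑' n, ∑' m, (a n ^ 2 + a m ^ 2) * (w n * w m) :=
        ENNReal.tsum_le_tsum fun n => ENNReal.tsum_le_tsum fun m =>
          mul_le_mul_left (two_mul_le_add_sq _ _) _
    _ = 2 * ((∑' n, a n ^ 2 * w n) * ∑' n, w n) := by
        simp only [add_mul, ENNReal.tsum_add, hswap, hprod, two_mul]

lemma lintegral_sq_tsum_mul_le {α : Type*} [MeasurableSpace α] (μ : Measure α) (a : ℕ → ℝ≥0∞)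
    {w : ℕ → α → ℝ≥0∞} (hw : ∀ n, Measurable (w n)) {C : ℝ≥0∞} (hC : ∀ x, ∑' n, w n x ≤ C) :
    ∫⁻ x, (∑' n, a n * w n x) ^ 2 ∂μ ≤ (∑' n, a n ^ 2 * ∫⁻ x, w n x ∂μ) * C :=
  calc ∫⁻ x, (∑' n, a n * w n x) ^ 2 ∂μ
      ≤ ∫⁻ x, (∑' n, a n ^ 2 * w n x) * C ∂μ :=
        lintegral_mono fun x => (ENNReal.sq_tsum_mul_le _ _).trans (mul_le_mul_right (hC x) _)
    _ = (∑' n, a n ^ 2 * ∫⁻ x, w n x ∂μ) * C := by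
        rw [lintegral_mul_const _ (.tsum fun n => (hw n).const_mul _),
          lintegral_tsum fun n => ((hw n).const_mul _).aemeasurable]
        simp_rw [lintegral_const_mul _ (hw _)]

lemma memLp_two_toReal_of_lintegral_sq_ne_top {α : Type*} [MeasurableSpace α] {μ : Measure α}
    {f : α → ℝ≥0∞} (hf : AEMeasurable f μ) (h : ∫⁻ x, f x ^ 2 ∂μ ≠ ∞) :
    MemLp (fun x => (f x).toReal) 2 μ := by
  rw [memLp_two_iff_integrable_sq hf.ennreal_toReal.aestronglyMeasurable]
  simp_rw [← ENNReal.toReal_pow]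
  exact integrable_toReal_of_lintegral_ne_top (hf.pow_const 2) h

lemma Real.exp_neg_sq_le_exp_one_mul {p t : ℝ} (h : |p - t| ≤ 1) (q : ℝ) :
    Real.exp (-(q - p) ^ 2) ≤ Real.exp 1 * Real.exp (-(q - t) ^ 2 / 2) := by
  rw [← Real.exp_add, Real.exp_le_exp]
  -- `(q - t)² ≤ 2 (q - p)² + 2 (p - t)²`
  nlinarith [sq_nonneg (q - p - (p - t)), (sq_le_one_iff_abs_le_one _).2 h]

lemma lintegral_exp_neg_sq_sub_div_two (c : ℝ) :
    ∫⁻ x, ENNReal.ofReal (Real.exp (-(x - c) ^ 2 / 2)) = ENNReal.ofReal √(2 * Real.pi) := by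
  have hform : ∀ x : ℝ, -x ^ 2 / 2 = -(1 / 2) * x ^ 2 := fun x => by ring
  have hint : Integrable fun x : ℝ => Real.exp (-x ^ 2 / 2) := by
    simpa only [hform, neg_mul] using integrable_exp_neg_mul_sq (b := 1 / 2) (by norm_num)
  rw [lintegral_sub_right_eq_self (fun x => ENNReal.ofReal (Real.exp (-x ^ 2 / 2))) c,
    ← ofReal_integral_eq_lintegral_ofReal hint (ae_of_all _ fun x => (Real.exp_pos _).le)]
  simp_rw [hform, integral_gaussian]
  norm_num [div_div_eq_mul_div, mul_comm]

lemma measurable_ofReal_exp_neg_sq_sub_div_two :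
    Measurable fun x : ℝ × ℝ => ENNReal.ofReal (Real.exp (-(x.1 - x.2) ^ 2 / 2)) :=
  Measurable.ennreal_ofReal (by fun_prop)

noncomputable def gaussMass (s : Set ℝ) (q : ℝ) : ℝ≥0∞ :=
  ∫⁻ t in s, ENNReal.ofReal (Real.exp (-(q - t) ^ 2 / 2))

lemma measurable_gaussMass (s : Set ℝ) : Measurable (gaussMass s) :=
  measurable_ofReal_exp_neg_sq_sub_div_two.lintegral_prod_right'

lemma gaussMass_univ (q : ℝ) : gaussMass univ q = ENNReal.ofReal √(2 * Real.pi) := by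
  simp_rw [gaussMass, Measure.restrict_univ, ← neg_sub _ q, neg_sq]
  exact lintegral_exp_neg_sq_sub_div_two q

lemma gaussMass_le (s : Set ℝ) (q : ℝ) : gaussMass s q ≤ ENNReal.ofReal √(2 * Real.pi) :=
  (lintegral_mono_set (subset_univ s)).trans_eq (gaussMass_univ q)

lemma lintegral_gaussMass (s : Set ℝ) :
    ∫⁻ q, gaussMass s q = ENNReal.ofReal √(2 * Real.pi) * volume s := by
  simp_rw [gaussMass]
  rw [lintegral_lintegral_swap measurable_ofReal_exp_neg_sq_sub_div_two.aemeasurable]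
  simp_rw [lintegral_exp_neg_sq_sub_div_two]
  exact setLIntegral_const s _

lemma tsum_gaussMass_Ioc_le (q : ℝ) :
    ∑' n : ℕ, gaussMass (Ioc ((n : ℝ) + 1) ((n : ℝ) + 2)) q ≤ ENNReal.ofReal √(2 * Real.pi) := by
  have hdisj :
      Pairwise (Function.onFun Disjoint fun n : ℕ => Ioc ((n : ℝ) + 1) ((n : ℝ) + 2)) := by
    convert (pairwise_disjoint_Ioc_add_intCast (1 : ℝ)).comp_of_injective
      Nat.cast_injective using 2 with n
    simp only [Int.cast_natCast]
    ring_nf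
  simp_rw [gaussMass]
  rw [← lintegral_iUnion (fun n => measurableSet_Ioc) hdisj, ← gaussMass_univ q]
  exact lintegral_mono_set (subset_univ _)

lemma Ici_one_subset_iUnion_Icc : Ici (1 : ℝ) ⊆ ⋃ n : ℕ, Icc ((n : ℝ) + 1) ((n : ℝ) + 2) := by
  intro x (hx : 1 ≤ x)
  refine mem_iUnion.2 ⟨⌊x - 1⌋₊, ?_, ?_⟩
  · linarith [Nat.floor_le (sub_nonneg.2 hx)]
  · linarith [Nat.lt_floor_add_one (x - 1)]

lemma setLIntegral_Ici_one_le_tsum (τ : Measure ℝ) {f : ℝ → ℝ≥0∞} {b : ℕ → ℝ≥0∞}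
    (hb : ∀ n : ℕ, ∀ p ∈ Icc ((n : ℝ) + 1) ((n : ℝ) + 2), f p ≤ b n) :
    ∫⁻ p in Ici 1, f p ∂τ ≤ ∑' n : ℕ, τ (Icc ((n : ℝ) + 1) ((n : ℝ) + 2)) * b n :=
  calc ∫⁻ p in Ici 1, f p ∂τ
      ≤ ∫⁻ p in ⋃ n : ℕ, Icc ((n : ℝ) + 1) ((n : ℝ) + 2), f p ∂τ :=
        lintegral_mono_set Ici_one_subset_iUnion_Icc
    _ ≤ ∑' n : ℕ, ∫⁻ p in Icc ((n : ℝ) + 1) ((n : ℝ) + 2), f p ∂τ := lintegral_iUnion_le _ _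
    _ ≤ ∑' n : ℕ, ∫⁻ _ in Icc ((n : ℝ) + 1) ((n : ℝ) + 2), b n ∂τ :=
        ENNReal.tsum_le_tsum fun n => setLIntegral_mono measurable_const (hb n)
    _ = ∑' n : ℕ, τ (Icc ((n : ℝ) + 1) ((n : ℝ) + 2)) * b n := by
        simp_rw [setLIntegral_const, mul_comm]

lemma ofReal_inv_mul_exp_le_gaussMass {n : ℕ} {p : ℝ} (hp : p ∈ Icc ((n : ℝ) + 1) ((n : ℝ) + 2))
    (q : ℝ) :
    ENNReal.ofReal (p⁻¹ * Real.exp (-(q - p) ^ 2))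
      ≤ ENNReal.ofReal (Real.exp 1) * gaussMass (Ioc ((n : ℝ) + 1) ((n : ℝ) + 2)) q := by
  have hp1 : 1 ≤ p := by linarith [hp.1, (n.cast_nonneg : (0 : ℝ) ≤ n)]
  calc ENNReal.ofReal (p⁻¹ * Real.exp (-(q - p) ^ 2))
      ≤ ENNReal.ofReal (Real.exp (-(q - p) ^ 2)) := ENNReal.ofReal_le_ofReal
        (mul_le_of_le_one_left (Real.exp_pos _).le (inv_le_one_of_one_le₀ hp1))
    _ = ∫⁻ _ in Ioc ((n : ℝ) + 1) ((n : ℝ) + 2), ENNReal.ofReal (Real.exp (-(q - p) ^ 2)) := by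
        rw [setLIntegral_const, Real.volume_Ioc]
        norm_num
    _ ≤ ∫⁻ t in Ioc ((n : ℝ) + 1) ((n : ℝ) + 2),
          ENNReal.ofReal (Real.exp 1) * ENNReal.ofReal (Real.exp (-(q - t) ^ 2 / 2)) := by
        refine setLIntegral_mono ((Measurable.ennreal_ofReal (by fun_prop)).const_mul _)
          fun t ht => ?_
        rw [← ENNReal.ofReal_mul (Real.exp_pos _).le]
        refine ENNReal.ofReal_le_ofReal (Real.exp_neg_sq_le_exp_one_mul ?_ q)
        rw [abs_le]
        constructor <;> linarith [hp.1, hp.2, ht.1, ht.2]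
    _ = ENNReal.ofReal (Real.exp 1) * gaussMass (Ioc ((n : ℝ) + 1) ((n : ℝ) + 2)) q :=
        lintegral_const_mul _ (Measurable.ennreal_ofReal (by fun_prop))

lemma setLIntegral_Ici_one_le_tsum_gaussMass (τ : Measure ℝ) (q : ℝ) :
    ∫⁻ p in Ici (1 : ℝ), ENNReal.ofReal (p⁻¹ * Real.exp (-(q - p) ^ 2)) ∂τ
      ≤ ENNReal.ofReal (Real.exp 1) * ∑' n : ℕ, τ (Icc ((n : ℝ) + 1) ((n : ℝ) + 2)) *
          gaussMass (Ioc ((n : ℝ) + 1) ((n : ℝ) + 2)) q := by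
  rw [← ENNReal.tsum_mul_left]
  exact (setLIntegral_Ici_one_le_tsum τ fun n p hp =>
    ofReal_inv_mul_exp_le_gaussMass hp q).trans_eq (tsum_congr fun n => mul_left_comm _ _ _)

theorem stmt_5_general (τ : Measure ℝ) [IsLocallyFiniteMeasure τ]
    (hl2 : (∑' n : ℕ, (τ (Icc ((n : ℝ) + 1) ((n : ℝ) + 2))) ^ 2) < ⊤) :
    (∀ q : ℝ,
      (∫⁻ p in Ici (1 : ℝ), ENNReal.ofReal (p⁻¹ * Real.exp (-(q - p) ^ 2)) ∂τ) < ⊤) ∧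
    MemLp
      (fun q : ℝ => (Real.sqrt Real.pi)⁻¹ *
        (∫⁻ p in Ici (1 : ℝ), ENNReal.ofReal (p⁻¹ * Real.exp (-(q - p) ^ 2)) ∂τ).toReal)
      2 volume := by
  set F : ℝ → ℝ≥0∞ := fun q =>
    ∫⁻ p in Ici (1 : ℝ), ENNReal.ofReal (p⁻¹ * Real.exp (-(q - p) ^ 2)) ∂τ
  set a : ℕ → ℝ≥0∞ := fun n => τ (Icc ((n : ℝ) + 1) ((n : ℝ) + 2))
  set w : ℕ → ℝ → ℝ≥0∞ := fun n => gaussMass (Ioc ((n : ℝ) + 1) ((n : ℝ) + 2))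
  set K : ℝ≥0∞ := ENNReal.ofReal √(2 * Real.pi)
  set e : ℝ≥0∞ := ENNReal.ofReal (Real.exp 1)
  have hF : ∀ q, F q ^ 2 ≤ e ^ 2 * (∑' n, a n * w n q) ^ 2 := fun q => by
    rw [← mul_pow]
    exact pow_le_pow_left₀ zero_le (setLIntegral_Ici_one_le_tsum_gaussMass τ q) 2
  have hw_int : ∀ n, ∫⁻ q, w n q = K := fun n => by
    rw [lintegral_gaussMass, Real.volume_Ioc, show (n : ℝ) + 2 - (n + 1) = 1 by ring,
      ENNReal.ofReal_one, mul_one]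
  have hfin : e ^ 2 * ((∑' n, a n ^ 2) * K * K) < ∞ := ENNReal.mul_lt_top (by finiteness)
    (ENNReal.mul_lt_top (ENNReal.mul_lt_top hl2 ENNReal.ofReal_lt_top) ENNReal.ofReal_lt_top)
  refine ⟨fun q => ?_, ?_⟩
  · have hsq : (∑' n, a n * w n q) ^ 2 ≤ (∑' n, a n ^ 2) * K * K := calc
      _ ≤ (∑' n, a n ^ 2 * w n q) * ∑' n, w n q := ENNReal.sq_tsum_mul_le _ _
      _ ≤ (∑' n, a n ^ 2 * K) * K := by
        gcongr with n
        exacts [gaussMass_le _ q, tsum_gaussMass_Ioc_le q]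
      _ = _ := by rw [ENNReal.tsum_mul_right]
    have hFq : F q ^ 2 < ∞ := ((hF q).trans (by gcongr)).trans_lt hfin
    simpa using hFq
  · have hFm : Measurable F := Measurable.lintegral_prod_right'
      (f := fun x : ℝ × ℝ => ENNReal.ofReal (x.2⁻¹ * Real.exp (-(x.1 - x.2) ^ 2)))
      (Measurable.ennreal_ofReal (by fun_prop))
    have hF2 : ∫⁻ q, F q ^ 2 < ∞ := calc
      ∫⁻ q, F q ^ 2 ≤ ∫⁻ q, e ^ 2 * (∑' n, a n * w n q) ^ 2 := lintegral_mono hF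
      _ = e ^ 2 * ∫⁻ q, (∑' n, a n * w n q) ^ 2 := lintegral_const_mul' _ _ (by finiteness)
      _ ≤ e ^ 2 * ((∑' n, a n ^ 2 * ∫⁻ q, w n q) * K) := by
        gcongr
        exact lintegral_sq_tsum_mul_le volume a (fun n => measurable_gaussMass _)
          tsum_gaussMass_Ioc_le
      _ = e ^ 2 * ((∑' n, a n ^ 2) * K * K) := by simp_rw [hw_int, ENNReal.tsum_mul_right]
      _ < ∞ := hfin
    exact (memLp_two_toReal_of_lintegral_sq_ne_top hFm.aemeasurable hF2.ne).const_mul _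

/-- Let `τ` be a locally finite positive Borel measure on `[1,∞)` with
`Σ_{n=1}^∞ τ([n,n+1])² < ∞`.  Then `F(q) = π^{-1/2} ∫_{[1,∞)} p⁻¹ e^{-(q-p)²} dτ(p)` is
finite for every `q ∈ ℝ` and belongs to `L²(ℝ, dq)`. -/
theorem stmt_5 (τ : Measure ℝ) [IsLocallyFiniteMeasure τ] (hsupp : τ (Iio 1) = 0)
    (hl2 : (∑' n : ℕ, (τ (Icc ((n : ℝ) + 1) ((n : ℝ) + 2))) ^ 2) < ⊤) :
    (∀ q : ℝ,
      (∫⁻ p in Ici (1 : ℝ), ENNReal.ofReal (p⁻¹ * Real.exp (-(q - p) ^ 2)) ∂τ) < ⊤) ∧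
    MemLp
      (fun q : ℝ => (Real.sqrt Real.pi)⁻¹ *
        (∫⁻ p in Ici (1 : ℝ), ENNReal.ofReal (p⁻¹ * Real.exp (-(q - p) ^ 2)) ∂τ).toReal)
      2 volume :=
  stmt_5_general τ hl2
end

section
/- Let k be a nonzero complex number with Re k > 0 and Im k ≥ 0, so that k = |k|e^{iη} with η ∈ [0, π/2). Then sup { |(ik − z)/(ik + z)| : z ∈ ℂ, Im z > 0 } = ((1 + sin η)/(1 − sin η))^{1/2}, where sin η = Im k / |k|. -/
/-!
Write `k = a + bi` with `r = ‖k‖`. For `z = x + yi` a direct expansion, using `r² = a² + b²`, gives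
`(r + b)|ik + z|² - (r - b)|ik - z|² = 2(2ray + b|z - r|²)`,
which is nonnegative on the closed upper half-plane and vanishes at the boundary point `z = r`.
So `|(ik - z)/(ik + z)|² ≤ (r + b)/(r - b)` there, with equality at `z = r`, and by continuity
the supremum over the open half-plane is this value.
-/

open Complex

theorem ciSup_subtype_eq_of_mem_closure {X : Type*} [TopologicalSpace X] {s : Set X}
    {f : X → ℝ} {p : X} (hp : p ∈ closure s) (hf : ContinuousWithinAt f s p)
    (hle : ∀ x ∈ s, f x ≤ f p) : ⨆ x : s, f x = f p := by
  have : Nonempty s := (closure_nonempty_iff.mp ⟨p, hp⟩).to_subtype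
  have hbdd : BddAbove (Set.range fun x : s => f x) :=
    ⟨f p, by rintro _ ⟨x, rfl⟩; exact hle x x.2⟩
  refine le_antisymm (ciSup_le fun x => hle x x.2) ?_
  exact hf.closure_le hp continuousWithinAt_const fun x hx => le_ciSup hbdd ⟨x, hx⟩

theorem Complex.norm_div_eq_sqrt_normSq_div (u v : ℂ) : ‖u / v‖ = √(normSq u / normSq v) := by
  rw [norm_div, norm_def, norm_def, Real.sqrt_div' _ (normSq_nonneg v)]

theorem Complex.im_lt_norm_of_re_ne_zero {k : ℂ} (hk : k.re ≠ 0) : k.im < ‖k‖ :=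
  (le_abs_self _).trans_lt (abs_im_lt_norm.mpr hk)

theorem Complex.mul_normSq_I_mul_add_sub_mul_normSq_I_mul_sub (k z : ℂ) :
    (‖k‖ + k.im) * normSq (I * k + z) - (‖k‖ - k.im) * normSq (I * k - z) =
      2 * (2 * ‖k‖ * k.re * z.im + k.im * normSq (z - ‖k‖)) := by
  have hnorm : ‖k‖ ^ 2 = k.re ^ 2 + k.im ^ 2 := by rw [Complex.sq_norm, normSq_apply]; ring
  simp only [normSq_apply, add_re, add_im, sub_re, sub_im, mul_re, mul_im, I_re, I_im,
    ofReal_re, ofReal_im]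
  linear_combination -2 * k.im * hnorm

theorem Complex.mul_normSq_I_mul_sub_le {k z : ℂ} (hre : 0 ≤ k.re) (him : 0 ≤ k.im)
    (hz : 0 ≤ z.im) :
    (‖k‖ - k.im) * normSq (I * k - z) ≤ (‖k‖ + k.im) * normSq (I * k + z) := by
  have hid := mul_normSq_I_mul_add_sub_mul_normSq_I_mul_sub k z
  have hnonneg : 0 ≤ 2 * ‖k‖ * k.re * z.im + k.im * normSq (z - ‖k‖) :=
    add_nonneg (by positivity) (mul_nonneg him (normSq_nonneg _))
  linarith

theorem Complex.mul_normSq_I_mul_sub_norm (k : ℂ) :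
    (‖k‖ - k.im) * normSq (I * k - ‖k‖) = (‖k‖ + k.im) * normSq (I * k + ‖k‖) := by
  have hid := mul_normSq_I_mul_add_sub_mul_normSq_I_mul_sub k ‖k‖
  simp only [ofReal_im, mul_zero, sub_self, map_zero, add_zero] at hid
  linarith

theorem Complex.I_mul_add_ne_zero {k z : ℂ} (hre : 0 < k.re) (hz : 0 ≤ z.im) :
    I * k + z ≠ 0 := by
  intro h
  have him := congrArg im h
  simp only [add_im, mul_im, I_re, I_im, zero_im] at him
  linarith

theorem Complex.norm_div_I_mul_le {k z : ℂ} (hre : 0 < k.re) (him : 0 ≤ k.im)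
    (hz : 0 ≤ z.im) :
    ‖(I * k - z) / (I * k + z)‖ ≤ √((‖k‖ + k.im) / (‖k‖ - k.im)) := by
  rw [norm_div_eq_sqrt_normSq_div]
  refine Real.sqrt_le_sqrt ?_
  rw [div_le_div_iff₀ (normSq_pos.mpr (I_mul_add_ne_zero hre hz))
    (sub_pos.mpr (im_lt_norm_of_re_ne_zero hre.ne')), mul_comm]
  exact mul_normSq_I_mul_sub_le hre.le him hz

theorem Complex.norm_div_I_mul_norm {k : ℂ} (hre : 0 < k.re) :
    ‖(I * k - ‖k‖) / (I * k + ‖k‖)‖ = √((‖k‖ + k.im) / (‖k‖ - k.im)) := by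
  rw [norm_div_eq_sqrt_normSq_div]
  congr 1
  rw [div_eq_div_iff (normSq_pos.mpr (I_mul_add_ne_zero hre (by simp))).ne'
    (sub_pos.mpr (im_lt_norm_of_re_ne_zero hre.ne')).ne', mul_comm]
  exact mul_normSq_I_mul_sub_norm k

/-- Let `k` be a nonzero complex number with `Re k > 0` and `Im k ≥ 0`, so
that `k = |k|e^{iη}` with `η ∈ [0, π/2)` and `sin η = Im k / |k|`.  Then
`sup { |(ik − z)/(ik + z)| : Im z > 0 } = ((1 + sin η)/(1 − sin η))^{1/2}`. -/
theorem stmt_8 (k : ℂ) (hre : 0 < k.re) (him : 0 ≤ k.im) :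
    (⨆ z : {z : ℂ // 0 < z.im},
        ‖(Complex.I * k - (z : ℂ)) / (Complex.I * k + (z : ℂ))‖) =
      Real.sqrt ((1 + k.im / ‖k‖) / (1 - k.im / ‖k‖)) := by
  have hk : ‖k‖ ≠ 0 := norm_ne_zero_iff.mpr fun h => by simp [h] at hre
  rw [show (1 + k.im / ‖k‖) / (1 - k.im / ‖k‖) = (‖k‖ + k.im) / (‖k‖ - k.im) by
    field_simp, ← norm_div_I_mul_norm hre]
  have hden : I * k + (‖k‖ : ℂ) ≠ 0 := I_mul_add_ne_zero hre (by simp)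
  refine ciSup_subtype_eq_of_mem_closure (s := {z : ℂ | 0 < z.im})
    (f := fun z => ‖(I * k - z) / (I * k + z)‖) (by simp) ?_ fun z hz => ?_
  · fun_prop (disch := exact hden)
  · rw [norm_div_I_mul_norm hre]
    exact norm_div_I_mul_le hre him hz.le
end

section
/- Let C < ∞ and let f_n (n ∈ ℕ) and f_∞ be analytic functions on the open unit disk 𝔻 with |f_n(z)| ≤ C and |f_∞(z)| ≤ C for all z ∈ 𝔻 and all n, and suppose f_n(z) → f_∞(z) as n → ∞ for every z ∈ 𝔻. Suppose further that g_n, g_∞ : [0,2π) → ℂ are measurable functions such that for almost every θ, f_n(re^{iθ}) → g_n(θ) as r ↑ 1 for each n, and f_∞(re^{iθ}) → g_∞(θ) as r ↑ 1. Then g_n → g_∞ weak-*: for every G ∈ L¹([0,2π)), ∫₀^{2π} G(θ) g_n(θ) dθ/(2π) → ∫₀^{2π} G(θ) g_∞(θ) dθ/(2π) as n → ∞. -/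
/-!
Write `c_k(F, r) = ∫ e^{ikθ} F(r e^{iθ}) dθ`. Cauchy's theorem on annuli, applied to
`z ^ (k - 1) * F z`, shows that `r ^ k * c_k(F, r)` does not depend on `r ∈ (0, 1)`, and dominated
convergence as `r → 1` identifies it with the coefficient `∫ e^{ikθ} g(θ) dθ` of the boundary
function. So the Fourier coefficients of `g_n` are `2 ^ (-k) * c_k(f_n, 1/2)`, which converge to
those of `g_∞` by dominated convergence on the circle of radius `1/2`. Finally the `g_n` are bounded
by `C` in `L^∞`, so pairing with them is an equicontinuous family of functionals on `L¹`; as it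
converges on trigonometric polynomials, which are dense in `L¹` of the circle, it converges on all
of `L¹`.
-/

open MeasureTheory Filter Set Metric
open scoped Topology Real ENNReal
open Complex (I exp)

namespace MeasureTheory.Lp

variable {α ι : Type*} [MeasurableSpace α] {μ : Measure α}

theorem tendsto_integral_mul_of_dense_span {S : Set (Lp ℂ 1 μ)}
    (hS : (Submodule.span ℂ S).topologicalClosure = ⊤) {l : Filter ι} {ψ : ι → Lp ℂ ∞ μ}
    {ψ₀ : Lp ℂ ∞ μ} (hψ : BddAbove (range fun i => ‖ψ i‖))
    (hconv : ∀ P ∈ S, Tendsto (fun i => ∫ x, P x * ψ i x ∂μ) l (𝓝 (∫ x, P x * ψ₀ x ∂μ)))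
    (G : Lp ℂ 1 μ) :
    Tendsto (fun i => ∫ x, G x * ψ i x ∂μ) l (𝓝 (∫ x, G x * ψ₀ x ∂μ)) := by
  set B := (ContinuousLinearMap.mul ℂ ℂ).lpPairing μ 1 ∞
  have hB : ∀ P ψ, B P ψ = ∫ x, P x * ψ x ∂μ := fun P ψ => by
    simp [B, ContinuousLinearMap.lpPairing_eq_integral]
  simp_rw [← hB] at hconv ⊢
  have hequi : Equicontinuous fun i => ⇑(B.flip (ψ i)) := by
    obtain ⟨C, hC⟩ := hψ
    have h := (NormedSpace.equicontinuous_TFAE fun i => B.flip (ψ i)).out 5 1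
    refine h.mp ⟨‖B‖ * C, fun i => ?_⟩
    refine (B.flip.le_opNorm (ψ i)).trans ?_
    rw [B.opNorm_flip]
    gcongr
    exact hC (mem_range_self i)
  let M : Submodule ℂ (Lp ℂ 1 μ) :=
    { carrier := {P | Tendsto (fun i => B P (ψ i)) l (𝓝 (B P ψ₀))}
      add_mem' := fun {P Q} hP hQ => by simpa using hP.add hQ
      zero_mem' := by simpa using tendsto_const_nhds
      smul_mem' := fun c P hP => by simpa using hP.const_smul c }
  have hM : IsClosed (M : Set (Lp ℂ 1 μ)) :=
    hequi.isClosed_setOfPred_tendsto (B.flip ψ₀).continuous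
  have : (⊤ : Submodule ℂ (Lp ℂ 1 μ)) ≤ M :=
    hS ▸ (Submodule.span ℂ S).topologicalClosure_minimal (Submodule.span_le.mpr hconv) hM
  exact this Submodule.mem_top

end MeasureTheory.Lp

namespace AddCircle

variable {T : ℝ} [hT : Fact (0 < T)] (a : ℝ)

theorem measurePreserving_measurableEquivIco :
    MeasurePreserving (measurableEquivIco T a) volume (Measure.comap Subtype.val volume) := by
  refine MeasurePreserving.symm (measurableEquivIco T a).symm ?_
  have hmk : MeasurePreserving ((↑) : ℝ → AddCircle T) (volume.restrict (Ico a (a + T)))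
      volume := by
    rw [Measure.restrict_congr_set Ico_ae_eq_Ioc]
    exact AddCircle.measurePreserving_mk T a
  exact hmk.comp (measurePreserving_subtype_coe measurableSet_Ico)

theorem integral_haarAddCircle_eq_setIntegral {E : Type*} [NormedAddCommGroup E] [NormedSpace ℝ E]
    (F : AddCircle T → E) :
    ∫ x, F x ∂haarAddCircle = T⁻¹ • ∫ θ in Ico a (a + T), F θ := by
  rw [integral_haarAddCircle, ← AddCircle.integral_preimage T a,
    setIntegral_congr_set Ico_ae_eq_Ioc]

variable {a}

theorem memLp_liftIco {G : ℝ → ℂ} {p : ℝ≥0∞} (hG : MemLp G p (volume.restrict (Ico a (a + T)))) :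
    MemLp (liftIco T a G) p haarAddCircle :=
  memLp_haarAddCircle_iff.mpr <| (hG.comp_measurePreserving
    (measurePreserving_subtype_coe measurableSet_Ico)).comp_measurePreserving
    (measurePreserving_measurableEquivIco a)

theorem ae_haarAddCircle_liftIco {E : Type*} {G : ℝ → E} {P : E → Prop}
    (h : ∀ᵐ θ ∂volume.restrict (Ico a (a + T)), P (G θ)) :
    ∀ᵐ x ∂haarAddCircle, P (liftIco T a G x) := by
  have hac : (haarAddCircle : Measure (AddCircle T)) ≪ volume := by
    rw [volume_eq_smul_haarAddCircle]
    exact Measure.absolutelyContinuous_smul (ENNReal.ofReal_pos.mpr hT.out).ne'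
  have hsub : ∀ᵐ y ∂Measure.comap Subtype.val volume, P (G (y : Ico a (a + T))) :=
    (measurePreserving_subtype_coe measurableSet_Ico).quasiMeasurePreserving.ae h
  have he := (measurePreserving_measurableEquivIco (T := T) a).quasiMeasurePreserving.ae hsub
  have hlift : ∀ x, liftIco T a G x = G (measurableEquivIco T a x) := fun x => rfl
  simp only [hlift]
  exact hac he

variable {ι : Type*} {l : Filter ι}

theorem integral_mul_toLp_liftIco {P F : AddCircle T → ℂ} (hPF : P =ᵐ[haarAddCircle] F)
    {φ : ℝ → ℂ} (hφ : MemLp φ ∞ (volume.restrict (Ico a (a + T)))) :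
    ∫ x, P x * (memLp_liftIco hφ).toLp _ x ∂haarAddCircle
      = T⁻¹ • ∫ θ in Ico a (a + T), F θ * φ θ := by
  have hae : (fun x => P x * (memLp_liftIco hφ).toLp _ x) =ᵐ[haarAddCircle]
      fun x => F x * liftIco T a φ x := by
    filter_upwards [hPF, (memLp_liftIco hφ).coeFn_toLp] with x hP hφx
    rw [hP, hφx]
  rw [integral_congr_ae hae, integral_haarAddCircle_eq_setIntegral a]
  congr 1
  exact setIntegral_congr_fun measurableSet_Ico fun θ hθ => by rw [liftIco_coe_apply hθ]

theorem tendsto_setIntegral_mul_of_tendsto_fourier {C : ℝ} {ψ : ι → ℝ → ℂ} {ψ₀ : ℝ → ℂ}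
    (hψ : ∀ i, MemLp (ψ i) ∞ (volume.restrict (Ico a (a + T))))
    (hψC : ∀ i, ∀ᵐ θ ∂volume.restrict (Ico a (a + T)), ‖ψ i θ‖ ≤ C)
    (hψ₀ : MemLp ψ₀ ∞ (volume.restrict (Ico a (a + T))))
    (hfourier : ∀ k : ℤ,
      Tendsto (fun i => ∫ θ in Ico a (a + T), fourier k (θ : AddCircle T) * ψ i θ) l
        (𝓝 (∫ θ in Ico a (a + T), fourier k (θ : AddCircle T) * ψ₀ θ)))
    {G : ℝ → ℂ} (hG : IntegrableOn G (Ico a (a + T))) :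
    Tendsto (fun i => ∫ θ in Ico a (a + T), G θ * ψ i θ) l
      (𝓝 (∫ θ in Ico a (a + T), G θ * ψ₀ θ)) := by
  have hG₁ : MemLp (liftIco T a G) 1 haarAddCircle :=
    memLp_liftIco (memLp_one_iff_integrable.mpr hG)
  have hbdd : BddAbove (range fun i => ‖(memLp_liftIco (hψ i)).toLp _‖) := by
    refine ⟨max C 0, forall_mem_range.mpr fun i => ?_⟩
    refine (Lp.norm_le_of_ae_bound (le_max_right C 0) ?_).trans (by simp)
    filter_upwards [(memLp_liftIco (hψ i)).coeFn_toLp,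
      ae_haarAddCircle_liftIco (P := fun z => ‖z‖ ≤ C) (hψC i)] with x hx hxC
    exact hx ▸ hxC.trans (le_max_left C 0)
  have hlim := Lp.tendsto_integral_mul_of_dense_span
    (span_fourierLp_closure_eq_top ENNReal.one_ne_top) hbdd (l := l)
    (ψ₀ := (memLp_liftIco hψ₀).toLp _) ?_ (hG₁.toLp _)
  · have hGφ : ∀ φ : ℝ → ℂ, ∫ θ in Ico a (a + T), liftIco T a G θ * φ θ
        = ∫ θ in Ico a (a + T), G θ * φ θ := fun φ =>
      setIntegral_congr_fun measurableSet_Ico fun θ hθ => by rw [liftIco_coe_apply hθ]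
    simp only [integral_mul_toLp_liftIco hG₁.coeFn_toLp (hψ _),
      integral_mul_toLp_liftIco hG₁.coeFn_toLp hψ₀, hGφ] at hlim
    simpa [smul_smul, hT.out.ne'] using hlim.const_smul T
  · rintro _ ⟨k, rfl⟩
    simp only [integral_mul_toLp_liftIco (coeFn_fourierLp 1 k) (hψ _),
      integral_mul_toLp_liftIco (coeFn_fourierLp 1 k) hψ₀]
    exact (hfourier k).const_smul T⁻¹

end AddCircle

theorem tendsto_integral_mul_of_tendsto_of_bound {α ι : Type*} [MeasurableSpace α]
    {μ : Measure α} {l : Filter ι} [l.IsCountablyGenerated] {w : α → ℂ} (hw : Integrable w μ)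
    {Φ : ι → α → ℂ} {Φ₀ : α → ℂ} {C : ℝ} (hΦ : ∀ᶠ i in l, AEStronglyMeasurable (Φ i) μ)
    (hΦC : ∀ᶠ i in l, ∀ᵐ x ∂μ, ‖Φ i x‖ ≤ C) (hlim : ∀ᵐ x ∂μ, Tendsto (Φ · x) l (𝓝 (Φ₀ x))) :
    Tendsto (fun i => ∫ x, w x * Φ i x ∂μ) l (𝓝 (∫ x, w x * Φ₀ x ∂μ)) := by
  refine tendsto_integral_filter_of_dominated_convergence (fun x => ‖w x‖ * C)
    (hΦ.mono fun i hi => hw.aestronglyMeasurable.mul hi) ?_ (hw.norm.mul_const C)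
    (hlim.mono fun x hx => hx.const_mul (w x))
  filter_upwards [hΦC] with i hi
  filter_upwards [hi] with x hx
  rw [norm_mul]
  exact mul_le_mul_of_nonneg_left hx (norm_nonneg _)

/-- Weighted by `e^{ikθ}` rather than `e^{-ikθ}`, so that it matches `fourier k` in the pairing of
the final theorem: this is `2π` times the `(-k)`-th Fourier coefficient of `θ ↦ F (r e^{iθ})`. -/
noncomputable def circleFourierCoeff (F : ℂ → ℂ) (k : ℤ) (r : ℝ) : ℂ :=
  ∫ θ in Ico 0 (2 * π), exp (I * θ) ^ k * F (r * exp (I * θ))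

theorem circleIntegral_zpow_sub_one_mul_eq (F : ℂ → ℂ) (k : ℤ) {r : ℝ} (hr : r ≠ 0) :
    (∮ z in C(0, r), z ^ (k - 1) * F z) = I * (r : ℂ) ^ k * circleFourierCoeff F k r := by
  rw [circleIntegral, intervalIntegral.integral_of_le Real.two_pi_pos.le,
    ← setIntegral_congr_set Ico_ae_eq_Ioc, circleFourierCoeff, ← integral_const_mul]
  refine setIntegral_congr_fun measurableSet_Ico fun θ _ => ?_
  have hr' : (r : ℂ) ≠ 0 := by exact_mod_cast hr
  have hz : (r : ℂ) * exp (I * θ) ≠ 0 := mul_ne_zero hr' (Complex.exp_ne_zero _)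
  simp only [deriv_circleMap, circleMap, zero_add, smul_eq_mul, mul_comm (θ : ℂ) I]
  rw [zpow_sub_one₀ hz, mul_zpow]
  field_simp

variable {F : ℂ → ℂ} {R : ℝ}

theorem circleIntegral_zpow_mul_eq_of_le (hF : DifferentiableOn ℂ F (ball 0 R)) (k : ℤ) {r s : ℝ}
    (hr : 0 < r) (hrs : r ≤ s) (hs : s < R) :
    (∮ z in C(0, s), z ^ k * F z) = ∮ z in C(0, r), z ^ k * F z := by
  have hne : ∀ z ∈ closedBall (0 : ℂ) s \ ball 0 r, z ≠ 0 := fun z hz h0 =>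
    hz.2 (by simpa [h0] using hr)
  have hsub : closedBall (0 : ℂ) s ⊆ ball 0 R := closedBall_subset_ball hs
  refine Complex.circleIntegral_eq_of_differentiable_on_annulus_off_countable hr hrs
    countable_empty ?_ fun z hz => ?_
  · exact (continuousOn_id.zpow₀ k fun z hz => Or.inl (hne z hz)).mul
      (hF.continuousOn.mono (sdiff_subset.trans hsub))
  · have hz' : z ∈ closedBall (0 : ℂ) s \ ball 0 r :=
      ⟨ball_subset_closedBall hz.1.1, fun h => hz.1.2 (ball_subset_closedBall h)⟩
    exact (differentiableAt_zpow.mpr (Or.inl (hne z hz'))).mul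
      (hF.differentiableAt (isOpen_ball.mem_nhds (hsub hz'.1)))

theorem zpow_mul_circleFourierCoeff_eq (hF : DifferentiableOn ℂ F (ball 0 R)) (k : ℤ) {r s : ℝ}
    (hr : 0 < r) (hrR : r < R) (hs : 0 < s) (hsR : s < R) :
    (r : ℂ) ^ k * circleFourierCoeff F k r = (s : ℂ) ^ k * circleFourierCoeff F k s := by
  wlog hrs : r ≤ s generalizing r s
  · exact (this hs hsR hr hrR (le_of_not_ge hrs)).symm
  have h := circleIntegral_zpow_mul_eq_of_le hF (k - 1) hr hrs hsR
  rw [circleIntegral_zpow_sub_one_mul_eq F k hr.ne', circleIntegral_zpow_sub_one_mul_eq F k hs.ne',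
    mul_assoc, mul_assoc] at h
  exact (mul_left_cancel₀ Complex.I_ne_zero h).symm

theorem norm_ofReal_mul_exp_I_mul (r θ : ℝ) : ‖(r : ℂ) * exp (I * θ)‖ = |r| := by
  rw [norm_mul, Complex.norm_exp_I_mul_ofReal, Complex.norm_real, Real.norm_eq_abs, mul_one]


theorem ofReal_mul_exp_I_mul_mem_ball {r : ℝ} (hr : |r| < 1) (θ : ℝ) :
    (r : ℂ) * exp (I * θ) ∈ ball (0 : ℂ) 1 := by
  rwa [mem_ball_zero_iff, norm_ofReal_mul_exp_I_mul]

theorem abs_lt_one_of_mem_Ioo {r : ℝ} (hr : r ∈ Ioo 0 1) : |r| < 1 := by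
  rw [abs_of_pos hr.1]; exact hr.2

theorem ContinuousOn.continuous_comp_ofReal_mul_exp_I_mul (hF : ContinuousOn F (ball 0 1))
    {r : ℝ} (hr : |r| < 1) : Continuous fun θ : ℝ => F (r * exp (I * θ)) :=
  hF.comp_continuous (by fun_prop) (ofReal_mul_exp_I_mul_mem_ball hr)

theorem integrableOn_exp_I_mul_zpow (k : ℤ) :
    IntegrableOn (fun θ : ℝ => exp (I * θ) ^ k) (Ico 0 (2 * π)) :=
  (Continuous.integrableOn_Icc ((by fun_prop : Continuous fun θ : ℝ => exp (I * θ)).zpow₀ k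
    fun _ => Or.inl (Complex.exp_ne_zero _))).mono_set Ico_subset_Icc_self

variable {C : ℝ}

theorem norm_le_of_tendsto_radial (hFC : ∀ z ∈ ball (0 : ℂ) 1, ‖F z‖ ≤ C) {θ : ℝ} {w : ℂ}
    (h : Tendsto (fun r : ℝ => F (r * exp (I * θ))) (𝓝[<] 1) (𝓝 w)) : ‖w‖ ≤ C :=
  le_of_tendsto h.norm <| eventually_of_mem (Ioo_mem_nhdsLT one_pos) fun _ hr =>
    hFC _ (ofReal_mul_exp_I_mul_mem_ball (abs_lt_one_of_mem_Ioo hr) θ)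

theorem tendsto_circleFourierCoeff_nhdsLT_one (hF : ContinuousOn F (ball 0 1))
    (hFC : ∀ z ∈ ball (0 : ℂ) 1, ‖F z‖ ≤ C) {bv : ℝ → ℂ}
    (hbv : ∀ᵐ θ : ℝ ∂volume.restrict (Ico 0 (2 * π)),
      Tendsto (fun r : ℝ => F (r * exp (I * θ))) (𝓝[<] 1) (𝓝 (bv θ))) (k : ℤ) :
    Tendsto (circleFourierCoeff F k) (𝓝[<] 1)
      (𝓝 (∫ θ in Ico 0 (2 * π), exp (I * θ) ^ k * bv θ)) :=
  tendsto_integral_mul_of_tendsto_of_bound (integrableOn_exp_I_mul_zpow k)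
    (eventually_of_mem (Ioo_mem_nhdsLT one_pos) fun _ hr =>
      (hF.continuous_comp_ofReal_mul_exp_I_mul (abs_lt_one_of_mem_Ioo hr)).aestronglyMeasurable)
    (eventually_of_mem (Ioo_mem_nhdsLT one_pos) fun _ hr => ae_of_all _ fun θ =>
      hFC _ (ofReal_mul_exp_I_mul_mem_ball (abs_lt_one_of_mem_Ioo hr) θ))
    hbv

theorem setIntegral_boundary_eq_zpow_mul_circleFourierCoeff (hF : DifferentiableOn ℂ F (ball 0 1))
    (hFC : ∀ z ∈ ball (0 : ℂ) 1, ‖F z‖ ≤ C) {bv : ℝ → ℂ}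
    (hbv : ∀ᵐ θ : ℝ ∂volume.restrict (Ico 0 (2 * π)),
      Tendsto (fun r : ℝ => F (r * exp (I * θ))) (𝓝[<] 1) (𝓝 (bv θ))) (k : ℤ) {ρ : ℝ}
    (hρ : ρ ∈ Ioo 0 1) :
    ∫ θ in Ico 0 (2 * π), exp (I * θ) ^ k * bv θ = (ρ : ℂ) ^ k * circleFourierCoeff F k ρ := by
  refine tendsto_nhds_unique (tendsto_circleFourierCoeff_nhdsLT_one hF.continuousOn hFC hbv k) ?_
  have hpow : Tendsto (fun r : ℝ => ((r : ℂ) ^ k)⁻¹) (𝓝[<] 1) (𝓝 1) := by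
    have h : ContinuousAt (fun r : ℝ => ((r : ℂ) ^ k)⁻¹) 1 :=
      (Complex.continuous_ofReal.continuousAt.zpow₀ k (by simp)).inv₀ (by simp)
    simpa using h.tendsto.mono_left nhdsWithin_le_nhds
  have hlim := hpow.mul_const ((ρ : ℂ) ^ k * circleFourierCoeff F k ρ)
  rw [one_mul] at hlim
  refine hlim.congr' ?_
  filter_upwards [Ioo_mem_nhdsLT one_pos] with r hr
  rw [← zpow_mul_circleFourierCoeff_eq hF k hr.1 hr.2 hρ.1 hρ.2,
    inv_mul_cancel_left₀ (zpow_ne_zero _ (by exact_mod_cast hr.1.ne'))]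

section Sequence

variable {ι : Type*} {l : Filter ι} [l.IsCountablyGenerated] {f : ι → ℂ → ℂ} {f₀ : ℂ → ℂ}

theorem tendsto_circleFourierCoeff_of_tendsto (hf : ∀ i, ContinuousOn (f i) (ball 0 1))
    (hfC : ∀ i, ∀ z ∈ ball (0 : ℂ) 1, ‖f i z‖ ≤ C)
    (hlim : ∀ z ∈ ball (0 : ℂ) 1, Tendsto (f · z) l (𝓝 (f₀ z))) (k : ℤ) {r : ℝ} (hr : |r| < 1) :
    Tendsto (fun i => circleFourierCoeff (f i) k r) l (𝓝 (circleFourierCoeff f₀ k r)) :=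
  tendsto_integral_mul_of_tendsto_of_bound (integrableOn_exp_I_mul_zpow k)
    (Eventually.of_forall fun i =>
      ((hf i).continuous_comp_ofReal_mul_exp_I_mul hr).aestronglyMeasurable)
    (Eventually.of_forall fun i => ae_of_all _ fun θ =>
      hfC i _ (ofReal_mul_exp_I_mul_mem_ball hr θ))
    (ae_of_all _ fun θ => hlim _ (ofReal_mul_exp_I_mul_mem_ball hr θ))

theorem tendsto_setIntegral_boundary_of_tendsto (hf : ∀ i, DifferentiableOn ℂ (f i) (ball 0 1))
    (hf₀ : DifferentiableOn ℂ f₀ (ball 0 1)) (hfC : ∀ i, ∀ z ∈ ball (0 : ℂ) 1, ‖f i z‖ ≤ C)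
    (hf₀C : ∀ z ∈ ball (0 : ℂ) 1, ‖f₀ z‖ ≤ C)
    (hlim : ∀ z ∈ ball (0 : ℂ) 1, Tendsto (f · z) l (𝓝 (f₀ z))) {g : ι → ℝ → ℂ} {g₀ : ℝ → ℂ}
    (hg : ∀ i, ∀ᵐ θ : ℝ ∂volume.restrict (Ico 0 (2 * π)),
      Tendsto (fun r : ℝ => f i (r * exp (I * θ))) (𝓝[<] 1) (𝓝 (g i θ)))
    (hg₀ : ∀ᵐ θ : ℝ ∂volume.restrict (Ico 0 (2 * π)),
      Tendsto (fun r : ℝ => f₀ (r * exp (I * θ))) (𝓝[<] 1) (𝓝 (g₀ θ))) (k : ℤ) :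
    Tendsto (fun i => ∫ θ in Ico 0 (2 * π), exp (I * θ) ^ k * g i θ) l
      (𝓝 (∫ θ in Ico 0 (2 * π), exp (I * θ) ^ k * g₀ θ)) := by
  have hρ : (2⁻¹ : ℝ) ∈ Ioo 0 1 := by norm_num
  rw [setIntegral_boundary_eq_zpow_mul_circleFourierCoeff hf₀ hf₀C hg₀ k hρ]
  refine ((tendsto_circleFourierCoeff_of_tendsto (fun i => (hf i).continuousOn) hfC hlim k
    (abs_lt_one_of_mem_Ioo hρ)).const_mul _).congr fun i => ?_
  rw [setIntegral_boundary_eq_zpow_mul_circleFourierCoeff (hf i) (hfC i) (hg i) k hρ]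

end Sequence

theorem fourier_coe_two_pi [Fact (0 < 2 * π)] (k : ℤ) (θ : ℝ) :
    fourier k (θ : AddCircle (2 * π)) = exp (I * θ) ^ k := by
  rw [fourier_coe_apply, ← Complex.exp_int_mul]
  congr 1
  field_simp
  push_cast
  ring

/-- Let `f_n` and `f_∞` be analytic functions on the open unit disk,
uniformly bounded by `C`, with `f_n(z) → f_∞(z)` for every `z` in the disk.  Suppose
`g_n, g_∞` are measurable and, for almost every `θ`, are the radial boundary values of
`f_n, f_∞`.  Then `g_n → g_∞` weak-*: for every `G ∈ L¹([0,2π))`,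
`∫ G(θ) g_n(θ) dθ/(2π) → ∫ G(θ) g_∞(θ) dθ/(2π)`. -/
theorem stmt_9 (C : ℝ) (f : ℕ → ℂ → ℂ) (flim : ℂ → ℂ)
    (hf : ∀ n, DifferentiableOn ℂ (f n) (Metric.ball 0 1))
    (hflim : DifferentiableOn ℂ flim (Metric.ball 0 1))
    (hfb : ∀ n, ∀ z ∈ Metric.ball (0 : ℂ) 1, ‖f n z‖ ≤ C)
    (hflimb : ∀ z ∈ Metric.ball (0 : ℂ) 1, ‖flim z‖ ≤ C)
    (hconv : ∀ z ∈ Metric.ball (0 : ℂ) 1, Tendsto (fun n => f n z) atTop (𝓝 (flim z)))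
    (g : ℕ → ℝ → ℂ) (glim : ℝ → ℂ)
    (hgm : ∀ n, Measurable (g n)) (hglimm : Measurable glim)
    (hrad : ∀ᵐ θ : ℝ ∂(volume.restrict (Ico 0 (2 * Real.pi))),
      (∀ n, Tendsto (fun r : ℝ => f n ((r : ℂ) * Complex.exp (Complex.I * (θ : ℂ))))
          (𝓝[<] 1) (𝓝 (g n θ))) ∧
        Tendsto (fun r : ℝ => flim ((r : ℂ) * Complex.exp (Complex.I * (θ : ℂ))))
          (𝓝[<] 1) (𝓝 (glim θ))) :
    ∀ G : ℝ → ℂ, IntegrableOn G (Ico 0 (2 * Real.pi)) →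
      Tendsto (fun n => ∫ θ in Ico 0 (2 * Real.pi), G θ * g n θ / (2 * Real.pi))
        atTop (𝓝 (∫ θ in Ico 0 (2 * Real.pi), G θ * glim θ / (2 * Real.pi))) := by
  intro G hG
  have : Fact (0 < 2 * π) := ⟨Real.two_pi_pos⟩
  have hg (n : ℕ) := hrad.mono fun _ h => h.1 n
  have hglim := hrad.mono fun _ h => h.2
  have hgC (n : ℕ) := (hg n).mono fun _ h => norm_le_of_tendsto_radial (hfb n) h
  have hglimC := hglim.mono fun _ h => norm_le_of_tendsto_radial hflimb h
  have hweak := AddCircle.tendsto_setIntegral_mul_of_tendsto_fourier (T := 2 * π) (a := 0)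
    (l := atTop) (C := C) (ψ := g) (ψ₀ := glim)
  simp only [zero_add, fourier_coe_two_pi] at hweak
  simp only [integral_div]
  exact (hweak (fun n => memLp_top_of_bound (hgm n).aestronglyMeasurable C (hgC n)) hgC
    (memLp_top_of_bound hglimm.aestronglyMeasurable C hglimC)
    (tendsto_setIntegral_boundary_of_tendsto hf hflim hfb hflimb hconv hg hglim) hG).div_const _
end

section
/- Let k ∈ ℂ with Im k ≥ 0 and Re k ≠ 0, and let 0 < λ ≤ κ. Then k² + μ² ≠ 0 for every μ ∈ [λ, κ], and | ∫_λ^κ 2μ² / ( k·(k² + μ²) ) dμ | ≤ (κ² − λ²)/(Re k)². -/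
open Set

/-! Factor `k² + μ² = (k + iμ)(k − iμ)`. For `Im k ≥ 0` and `μ ≥ 0` the three factors of
`k (k + iμ)(k − iμ)` have norms at least `|Re k|`, `μ` and `|Re k|`, so the integrand is bounded
by `2μ / (Re k)²`, whose integral over `[λ, κ]` is `(κ² − λ²)/(Re k)²`. -/

namespace Complex

theorem sq_add_ofReal_sq_eq_mul (k : ℂ) (μ : ℝ) :
    k ^ 2 + (μ : ℂ) ^ 2 = (k + μ * I) * (k - μ * I) := by
  ring_nf
  rw [I_sq]
  ring

theorem mul_re_sq_le_norm_mul_sq_add_ofReal_sq {k : ℂ} (him : 0 ≤ k.im) {μ : ℝ} (hμ : 0 ≤ μ) :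
    μ * k.re ^ 2 ≤ ‖k * (k ^ 2 + (μ : ℂ) ^ 2)‖ := by
  have hk : |k.re| ≤ ‖k‖ := abs_re_le_norm k
  have hplus : μ ≤ ‖k + μ * I‖ :=
    calc μ ≤ (k + μ * I).im := by simp; linarith
      _ ≤ ‖k + μ * I‖ := im_le_norm _
  have hminus : |k.re| ≤ ‖k - μ * I‖ := by
    simpa using abs_re_le_norm (k - μ * I)
  calc μ * k.re ^ 2 = |k.re| * μ * |k.re| := by rw [← sq_abs]; ring
    _ ≤ ‖k‖ * ‖k + μ * I‖ * ‖k - μ * I‖ := by gcongr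
    _ = ‖k * (k ^ 2 + (μ : ℂ) ^ 2)‖ := by
      rw [sq_add_ofReal_sq_eq_mul, norm_mul, norm_mul, mul_assoc]

theorem sq_add_ofReal_sq_ne_zero {k : ℂ} (him : 0 ≤ k.im) (hre : k.re ≠ 0) {μ : ℝ} (hμ : 0 < μ) :
    k ^ 2 + (μ : ℂ) ^ 2 ≠ 0 := by
  intro h
  have := mul_re_sq_le_norm_mul_sq_add_ofReal_sq him hμ.le
  rw [h, mul_zero, norm_zero] at this
  have : 0 < μ * k.re ^ 2 := by positivity
  linarith

theorem norm_two_mul_ofReal_sq_div_mul_sq_add_ofReal_sq_le {k : ℂ} (him : 0 ≤ k.im) (hre : k.re ≠ 0) {μ : ℝ}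
    (hμ : 0 < μ) :
    ‖2 * (μ : ℂ) ^ 2 / (k * (k ^ 2 + (μ : ℂ) ^ 2))‖ ≤ 2 * μ / k.re ^ 2 := by
  have hnum : ‖2 * (μ : ℂ) ^ 2‖ = 2 * μ ^ 2 := by
    simp [abs_of_pos hμ]
  calc ‖2 * (μ : ℂ) ^ 2 / (k * (k ^ 2 + (μ : ℂ) ^ 2))‖
      = 2 * μ ^ 2 / ‖k * (k ^ 2 + (μ : ℂ) ^ 2)‖ := by rw [norm_div, hnum]
    _ ≤ 2 * μ ^ 2 / (μ * k.re ^ 2) := by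
      gcongr
      exact mul_re_sq_le_norm_mul_sq_add_ofReal_sq him hμ.le
    _ = 2 * μ / k.re ^ 2 := by field_simp

end Complex

/-- Let `k ∈ ℂ` with `Im k ≥ 0` and `Re k ≠ 0`, and let `0 < λ ≤ κ`.
Then `k² + μ² ≠ 0` for every `μ ∈ [λ, κ]`, and
`|∫_λ^κ 2μ² / (k·(k² + μ²)) dμ| ≤ (κ² − λ²)/(Re k)²`. -/
theorem stmt_19 (k : ℂ) (him : 0 ≤ k.im) (hre : k.re ≠ 0) (lam kap : ℝ)
    (hlam : 0 < lam) (hlk : lam ≤ kap) :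
    (∀ μ ∈ Icc lam kap, k ^ 2 + (μ : ℂ) ^ 2 ≠ 0) ∧
      ‖∫ μ in lam..kap, 2 * (μ : ℂ) ^ 2 / (k * (k ^ 2 + (μ : ℂ) ^ 2))‖ ≤
        (kap ^ 2 - lam ^ 2) / k.re ^ 2 := by
  refine ⟨fun μ hμ => Complex.sq_add_ofReal_sq_ne_zero him hre (hlam.trans_le hμ.1), ?_⟩
  have hbound : ∀ μ ∈ Ioc lam kap,
      ‖2 * (μ : ℂ) ^ 2 / (k * (k ^ 2 + (μ : ℂ) ^ 2))‖ ≤ 2 * μ / k.re ^ 2 := fun μ hμ =>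
    Complex.norm_two_mul_ofReal_sq_div_mul_sq_add_ofReal_sq_le him hre (hlam.trans hμ.1)
  calc ‖∫ μ in lam..kap, 2 * (μ : ℂ) ^ 2 / (k * (k ^ 2 + (μ : ℂ) ^ 2))‖
      ≤ ∫ μ in lam..kap, 2 * μ / k.re ^ 2 :=
        intervalIntegral.norm_integral_le_of_norm_le hlk (MeasureTheory.ae_of_all _ hbound)
          (Continuous.intervalIntegrable (by fun_prop) _ _)
    _ = (kap ^ 2 - lam ^ 2) / k.re ^ 2 := by
      rw [intervalIntegral.integral_div, intervalIntegral.integral_const_mul, integral_id]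
      ring
end
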